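/- Equivalence of LSkG and LSkT, second direction: for any LSkT derivation of T ⊢ C, there exists an LSkG derivation of T* | ⊢ C, where T* turns a tree into a formula by replacing commas with ⊗ and the empty tree with I. -/

import Mathlib

/-- Formulae of left skew monoidal closed logic: atoms, unit I, ⊗, ⊸. -/
inductive Fma : Type
  | atom : ℕ → Fma
  | I : Fma
  | tens : Fma → Fma → Fma
  | lolli : Fma → Fma → Fma

/-- Derivability in the stoup sequent calculus LSkG: `GDer S Γ A` means `S | Γ ⊢ A`. -/
inductive GDer : Option Fma → List Fma → Fma → Prop
  | ax {A} : GDer (some A) [] A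
  | lolliL {A B C Γ Δ} : GDer none Γ A → GDer (some B) Δ C →
      GDer (some (Fma.lolli A B)) (Γ ++ Δ) C
  | IL {Γ C} : GDer none Γ C → GDer (some Fma.I) Γ C
  | tensL {A B Γ C} : GDer (some A) (B :: Γ) C → GDer (some (Fma.tens A B)) Γ C
  | pass {A Γ C} : GDer (some A) Γ C → GDer none (A :: Γ) C
  | lolliR {S Γ A B} : GDer S (Γ ++ [A]) B → GDer S Γ (Fma.lolli A B)
  | IR : GDer none [] Fma.I
  | tensR {S Γ Δ A B} : GDer S Γ A → GDer none Δ B → GDer S (Γ ++ Δ) (Fma.tens A B)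

/-- Trees: formulae, the empty tree, and pairing. -/
inductive Tr : Type
  | fma : Fma → Tr
  | emp : Tr
  | pair : Tr → Tr → Tr

/-- Contexts: trees with a single hole. -/
inductive Ctx : Type
  | hole : Ctx
  | pairL : Ctx → Tr → Ctx
  | pairR : Tr → Ctx → Ctx

/-- Substitution of a tree into the hole of a context. -/
def plug : Ctx → Tr → Tr
  | Ctx.hole, U => U
  | Ctx.pairL C T, U => Tr.pair (plug C U) T
  | Ctx.pairR T C, U => Tr.pair T (plug C U)

/-- Derivability in the tree sequent calculus LSkT: `TDer T A` means `T ⊢ A`. -/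
inductive TDer : Tr → Fma → Prop
  | ax {A} : TDer (Tr.fma A) A
  | IL {T C} : TDer (plug T Tr.emp) C → TDer (plug T (Tr.fma Fma.I)) C
  | IR : TDer Tr.emp Fma.I
  | tensL {T A B C} : TDer (plug T (Tr.pair (Tr.fma A) (Tr.fma B))) C →
      TDer (plug T (Tr.fma (Fma.tens A B))) C
  | tensR {T U A B} : TDer T A → TDer U B → TDer (Tr.pair T U) (Fma.tens A B)
  | lolliL {T U A B C} : TDer U A → TDer (plug T (Tr.fma B)) C →
      TDer (plug T (Tr.pair (Tr.fma (Fma.lolli A B)) U)) C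
  | lolliR {T A B} : TDer (Tr.pair T (Tr.fma A)) B → TDer T (Fma.lolli A B)
  | assoc {T U₀ U₁ U₂ C} : TDer (plug T (Tr.pair U₀ (Tr.pair U₁ U₂))) C →
      TDer (plug T (Tr.pair (Tr.pair U₀ U₁) U₂)) C
  | unitL {T U C} : TDer (plug T U) C → TDer (plug T (Tr.pair Tr.emp U)) C
  | unitR {T U C} : TDer (plug T (Tr.pair U Tr.emp)) C → TDer (plug T U) C

/-- `T*`: turn a tree into a formula, replacing commas with ⊗ and `-` with `I`. -/
def Tr.star : Tr → Fma
  | Tr.fma A => A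
  | Tr.emp => Fma.I
  | Tr.pair T U => Fma.tens T.star U.star

/-!
Read a tree `T` as the formula `T*`. Logical rules of LSkT are simulated directly in LSkG. A rule
that rewrites a subtree `U` into `V` inside a context `c` is sound because `V* | ⊢ U*` is derivable
and entailments `X | ⊢ Y` lift through `c` by ⊗-congruence, so a cut on the stoup replaces `c[U]*`
by `c[V]*`. Admissibility of that cut is proved as usual: by induction on the cut formula, then on
the left premise, and for principal cuts on the right premise, where the ⊗ case also needs the
context cut on the smaller formula.
-/

theorem List.append_eq_append_cons_cases {α : Type*} {Γ Δ Δ₀ Δ₁ : List α} {A : α}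
    (h : Γ ++ Δ = Δ₀ ++ A :: Δ₁) :
    (∃ w, Γ = Δ₀ ++ A :: w ∧ Δ₁ = w ++ Δ) ∨ (∃ w, Δ₀ = Γ ++ w ∧ Δ = w ++ A :: Δ₁) := by
  rcases List.append_eq_append_iff.mp h with ⟨w, hΔ₀, hΔ⟩ | ⟨w, hΓ, hw⟩
  · exact .inr ⟨w, hΔ₀, hΔ⟩
  · rcases List.cons_eq_append_iff.mp hw with ⟨rfl, rfl⟩ | ⟨w', rfl, hΔ₁⟩
    · exact .inr ⟨[], by simpa using hΓ.symm, rfl⟩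
    · exact .inl ⟨w', hΓ, hΔ₁⟩

def SCutAdmissible (A : Fma) : Prop :=
  ∀ {S Γ Δ C}, GDer S Γ A → GDer (some A) Δ C → GDer S (Γ ++ Δ) C

def CCutAdmissible (A : Fma) : Prop :=
  ∀ {S Γ Δ₀ Δ₁ C}, GDer none Γ A → GDer S (Δ₀ ++ A :: Δ₁) C → GDer S (Δ₀ ++ Γ ++ Δ₁) C

theorem CCutAdmissible.of_scut {A : Fma} (hA : SCutAdmissible A) : CCutAdmissible A := by
  intro S Γ Δ₀ Δ₁ C f g
  generalize hΛ : Δ₀ ++ A :: Δ₁ = Λ at g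
  induction g generalizing Δ₀ Δ₁ with
  | ax | IR => simp at hΛ
  | lolliL g₁ g₂ ih₁ ih₂ =>
    rcases List.append_eq_append_cons_cases hΛ.symm with ⟨w, rfl, rfl⟩ | ⟨w, rfl, rfl⟩
    · simpa using GDer.lolliL (ih₁ rfl) g₂
    · simpa using GDer.lolliL g₁ (ih₂ rfl)
  | tensR g₁ g₂ ih₁ ih₂ =>
    rcases List.append_eq_append_cons_cases hΛ.symm with ⟨w, rfl, rfl⟩ | ⟨w, rfl, rfl⟩
    · simpa using GDer.tensR (ih₁ rfl) g₂
    · simpa using GDer.tensR g₁ (ih₂ rfl)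
  | IL _ ih => exact GDer.IL (ih hΛ)
  | tensL _ ih => exact GDer.tensL (ih (Δ₀ := _ :: Δ₀) (by simp [hΛ]))
  | lolliR _ ih => exact GDer.lolliR (by simpa using ih (Δ₁ := Δ₁ ++ [_]) (by simp [← hΛ]))
  | pass g ih =>
    cases Δ₀ with
    | nil =>
      obtain ⟨rfl, rfl⟩ := List.cons.inj hΛ
      simpa using hA f g
    | cons B Δ₀ =>
      obtain ⟨rfl, rfl⟩ := List.cons.inj hΛ
      exact GDer.pass (ih rfl)

namespace GDer

/-- A derivation of `A | Δ ⊢ C` is an axiom or a left rule on `A`, followed by right rules. -/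
theorem stoup_induction {A : Fma} {P : List Fma → Fma → Prop}
    (hax : P [] A)
    (hIL : A = Fma.I → ∀ {Δ C}, GDer none Δ C → P Δ C)
    (htensL : ∀ {A₁ A₂}, A = Fma.tens A₁ A₂ → ∀ {Δ C}, GDer (some A₁) (A₂ :: Δ) C → P Δ C)
    (hlolliL : ∀ {A₁ A₂}, A = Fma.lolli A₁ A₂ →
      ∀ {Γ Δ C}, GDer none Γ A₁ → GDer (some A₂) Δ C → P (Γ ++ Δ) C)
    (hlolliR : ∀ {Δ A' B}, P (Δ ++ [A']) B → P Δ (Fma.lolli A' B))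
    (htensR : ∀ {Γ Δ A' B}, P Γ A' → GDer none Δ B → P (Γ ++ Δ) (Fma.tens A' B))
    {Δ C} (g : GDer (some A) Δ C) : P Δ C := by
  generalize hS : some A = S at g
  induction g with
  | ax => cases hS; exact hax
  | IL g => cases hS; exact hIL rfl g
  | tensL g => cases hS; exact htensL rfl g
  | lolliL g₁ g₂ => cases hS; exact hlolliL rfl g₁ g₂
  | pass | IR => cases hS
  | lolliR _ ih => exact hlolliR (ih hS)
  | tensR _ g₂ ih => exact htensR (ih hS) g₂

theorem IL_inv {Δ C} (g : GDer (some Fma.I) Δ C) : GDer none Δ C :=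
  stoup_induction (P := fun Δ C => GDer none Δ C) IR (fun _ _ _ g => g) (fun h => by cases h)
    (fun h => by cases h) lolliR tensR g

theorem tensL_inv {A₁ A₂ Δ C} (g : GDer (some (Fma.tens A₁ A₂)) Δ C) :
    GDer (some A₁) (A₂ :: Δ) C :=
  stoup_induction (P := fun Δ C => GDer (some A₁) (A₂ :: Δ) C)
    (tensR (Γ := []) ax (pass ax)) (fun h => by cases h) (fun h _ _ g => by cases h; exact g)
    (fun h => by cases h) (fun h => lolliR (Γ := A₂ :: _) h) tensR g

theorem scut_tensR {A₁ A₂} (h₁ : SCutAdmissible A₁) (h₂ : CCutAdmissible A₂) {S Γ₁ Γ₂ Δ C}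
    (f₁ : GDer S Γ₁ A₁) (f₂ : GDer none Γ₂ A₂) (g : GDer (some (Fma.tens A₁ A₂)) Δ C) :
    GDer S (Γ₁ ++ Γ₂ ++ Δ) C :=
  h₂ f₂ (h₁ f₁ (tensL_inv g))

theorem scut_lolliR {A₁ A₂} (h₁ : CCutAdmissible A₁) (h₂ : SCutAdmissible A₂) {S Γ Δ C}
    (f : GDer S (Γ ++ [A₁]) A₂) (g : GDer (some (Fma.lolli A₁ A₂)) Δ C) : GDer S (Γ ++ Δ) C :=
  stoup_induction (A := Fma.lolli A₁ A₂) (P := fun Δ C => GDer S (Γ ++ Δ) C)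
    (by simpa using lolliR f) (fun h => by cases h) (fun h => by cases h)
    (fun h _ _ _ g₁ g₂ => by
      cases h
      rw [← List.append_assoc]
      exact h₂ (by simpa using h₁ (Δ₀ := Γ) (Δ₁ := []) g₁ f) g₂)
    (fun h => lolliR (by simpa using h)) (fun h g => by simpa using tensR h g) g

/-- Cuts commute with the left rules ending the left premise, so only principal cuts need an
argument; the one on `I` is `IL_inv`. -/
theorem scutAdmissible_of_principal {A : Fma}
    (htens : ∀ {A₁ A₂}, A = Fma.tens A₁ A₂ → ∀ {S Γ₁ Γ₂ Δ C},
      GDer S Γ₁ A₁ → GDer none Γ₂ A₂ → GDer (some A) Δ C → GDer S (Γ₁ ++ Γ₂ ++ Δ) C)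
    (hlolli : ∀ {A₁ A₂}, A = Fma.lolli A₁ A₂ → ∀ {S Γ Δ C},
      GDer S (Γ ++ [A₁]) A₂ → GDer (some A) Δ C → GDer S (Γ ++ Δ) C) :
    SCutAdmissible A := by
  intro S Γ Δ C f g
  induction f with
  | ax => exact g
  | lolliL f₁ _ _ ih => simpa using lolliL f₁ (ih htens hlolli g)
  | IL _ ih => exact IL (ih htens hlolli g)
  | tensL _ ih => exact tensL (ih htens hlolli g)
  | pass _ ih => exact pass (ih htens hlolli g)
  | IR => exact IL_inv g
  | tensR f₁ f₂ => exact htens rfl f₁ f₂ g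
  | lolliR f => exact hlolli rfl f g

theorem scutAdmissible : ∀ A, SCutAdmissible A
  | .atom _ => scutAdmissible_of_principal (fun h => by cases h) (fun h => by cases h)
  | .I => scutAdmissible_of_principal (fun h => by cases h) (fun h => by cases h)
  | .tens A₁ A₂ => scutAdmissible_of_principal
      (fun h => by
        cases h
        exact scut_tensR (scutAdmissible A₁) (CCutAdmissible.of_scut (scutAdmissible A₂)))
      (fun h => by cases h)
  | .lolli A₁ A₂ => scutAdmissible_of_principal (fun h => by cases h)
      (fun h => by
        cases h
        exact scut_lolliR (CCutAdmissible.of_scut (scutAdmissible A₁)) (scutAdmissible A₂))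

end GDer

def Ctx.star : Ctx → Fma → Fma
  | .hole, X => X
  | .pairL c T, X => .tens (c.star X) T.star
  | .pairR T c, X => .tens T.star (c.star X)

theorem Tr.star_plug (c : Ctx) (U : Tr) : (plug c U).star = c.star U.star := by
  induction c <;> simp [plug, Ctx.star, Tr.star, *]

namespace GDer

theorem ctx_star {X Y : Fma} (h : GDer (some X) [] Y) :
    ∀ c : Ctx, GDer (some (c.star X)) [] (c.star Y)
  | .hole => h
  | .pairL c _ => tensL (tensR (Γ := []) (ctx_star h c) (pass ax))
  | .pairR _ c => tensL (tensR (Γ := []) ax (pass (ctx_star h c)))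

theorem of_plug {c : Ctx} {U V : Tr} {C : Fma} (g : GDer (some (plug c U).star) [] C)
    (h : GDer (some V.star) [] U.star) : GDer (some (plug c V).star) [] C := by
  rw [Tr.star_plug] at g ⊢
  simpa using scutAdmissible _ (ctx_star h c) g

end GDer

/-- From LSkT to LSkG: `T ⊢ C` yields `T* | ⊢ C`. -/
theorem T2G (T : Tr) (C : Fma) (f : TDer T C) : GDer (some T.star) [] C := by
  induction f with
  | ax => exact .ax
  -- `-` and `I`, and `A, B` and `A ⊗ B`, have the same translation
  | IL _ ih | tensL _ ih => exact ih.of_plug .ax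
  | IR => exact .IL .IR
  | tensR _ _ ih₁ ih₂ => exact .tensL (.tensR (Γ := []) ih₁ (.pass ih₂))
  | lolliL _ _ ihU ih => exact ih.of_plug (.tensL (.lolliL (Δ := []) (.pass ihU) .ax))
  | @lolliR T A _ _ ih =>
    have pairing : GDer (some T.star) [A] (Tr.pair T (Tr.fma A)).star :=
      .tensR (Γ := []) .ax (.pass .ax)
    exact .lolliR (Γ := []) (by simpa using GDer.scutAdmissible _ pairing ih)
  | assoc _ ih =>
    exact ih.of_plug
      (.tensL (.tensL (.tensR (Γ := []) .ax (.pass (.tensR (Γ := []) .ax (.pass .ax))))))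
  | unitL _ ih => exact ih.of_plug (.tensL (.IL (.pass .ax)))
  | unitR _ ih => exact ih.of_plug (.tensR (Γ := []) .ax .IR)
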